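/- arXiv:2112.11127 — 2 statements merged into one kernel-verified Lean document; each statement's English description precedes it below -/
import Mathlib

section
/- For every n ≤ 5 and every gap sequence s for n (a finite set of positive integers with 1 ∈ s and max s ≤ n−1), the worst-case number of comparisons of Shellsort with gap sequence s over all permutations of {1,…,n} is at least n(n−1)/2; hence c_n = n(n−1)/2 for n ≤ 5. -/
/-- Insert `x` into an already-sorted prefix stored in reverse order
(rightmost element first), counting comparisons: one comparison per element
moved past, plus one terminating comparison unless the prefix is exhausted. -/
def insertR (x : ℕ) : List ℕ → List ℕ × ℕ
  | [] => ([x], 0)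
  | y :: ys =>
    if x < y then
      let r := insertR x ys
      (y :: r.1, r.2 + 1)
    else (x :: y :: ys, 1)

/-- Linear insertion sort, returning the sorted list in reverse order together
with the total number of comparisons. -/
def isortAux (l : List ℕ) : List ℕ × ℕ :=
  l.foldl (fun acc x =>
    let r := insertR x acc.1
    (r.1, acc.2 + r.2)) ([], 0)

/-- Number of comparisons used by linear insertion sort on `l`. -/
def insCost (l : List ℕ) : ℕ := (isortAux l).2

/-- The result of linear insertion sort on `l` (ascending). -/
def isort (l : List ℕ) : List ℕ := (isortAux l).1.reverse

/-- The subsequence of `l` at (0-based) positions congruent to `j` modulo `h`. -/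
def extract (h j : ℕ) (l : List ℕ) : List ℕ :=
  ((List.range l.length).filter (fun i => i % h = j)).map (fun i => l.getD i 0)

/-- The result of an `h`-gapped insertion-sort pass on `l`: each residue-class
subsequence is sorted ascending in place. -/
def gapPass (h : ℕ) (l : List ℕ) : List ℕ :=
  (List.range l.length).map (fun i => (isort (extract h (i % h) l)).getD (i / h) 0)

/-- Number of comparisons used by the `h`-gapped insertion-sort pass on `l`. -/
def gapPassCost (h : ℕ) (l : List ℕ) : ℕ :=
  ((List.range h).map (fun j => insCost (extract h j l))).sum

/-- Total number of comparisons of Shellsort on `l` with the gaps `hs`,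
performed in the given order. -/
def shellCostList : List ℕ → List ℕ → ℕ
  | [], _ => 0
  | h :: hs, l => gapPassCost h l + shellCostList hs (gapPass h l)

/-- Total number of comparisons of Shellsort on `l` with gap sequence `s`,
the increments being taken in decreasing order. -/
def shellCost (s : Finset ℕ) (l : List ℕ) : ℕ :=
  shellCostList ((s.sort (· ≤ ·)).reverse) l

/-- `s` is a gap sequence for `n`: a finite set of positive integers
containing `1` whose elements are at most `n - 1`. -/
def IsGapSeq (n : ℕ) (s : Finset ℕ) : Prop :=
  1 ∈ s ∧ ∀ k ∈ s, 1 ≤ k ∧ k ≤ n - 1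

/-- Worst-case number of comparisons of Shellsort with gap sequence `s`
over all permutations of `{1, …, n}`. -/
def maxCost (s : Finset ℕ) (n : ℕ) : ℕ :=
  (((List.range' 1 n).permutations).map (shellCost s)).foldr max 0

/-- The minimax number of comparisons `c n`: the least, over gap sequences `s`
for `n`, worst-case number of comparisons of Shellsort with gap sequence `s`. -/
noncomputable def minimax (n : ℕ) : ℕ :=
  sInf {m | ∃ s : Finset ℕ, IsGapSeq n s ∧ maxCost s n = m}

/-- `l` is Bad `(h,1)`-sorted: all `h` residue-class subsequences of `l`
are strictly decreasing. -/
def BadSorted (h : ℕ) (l : List ℕ) : Prop :=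
  ∀ j < h, (extract h j l).Chain' (· > ·)

instance (h : ℕ) (l : List ℕ) : Decidable (BadSorted h l) := by
  unfold BadSorted List.Chain'; infer_instance


set_option maxRecDepth 100000 in
lemma maxCost_eq_perm' (s : Finset ℕ) (n : ℕ) :
    maxCost s n =
      (((List.range' 1 n).permutations').map (shellCost s)).foldr max 0 :=
  @List.Perm.foldr_eq _ _ max _ _ max_left_commutative
    ((List.permutations_perm_permutations' _).map _) 0

lemma shellCost_eq_list (s : Finset ℕ) (L : List ℕ)
    (h : (s.sort (· ≤ ·)).reverse = L) : shellCost s = shellCostList L := by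
  funext l; rw [shellCost, h]

lemma le_foldr_max : ∀ {l : List ℕ} {x : ℕ}, x ∈ l → x ≤ l.foldr max 0
  | a :: t, x, hx => by
    rcases List.mem_cons.1 hx with rfl | h
    · exact le_max_left _ _
    · exact le_trans (le_foldr_max h) (le_max_right _ _)

lemma le_maxCost {b : ℕ} (s : Finset ℕ) (L : List ℕ)
    (hL : (s.sort (· ≤ ·)).reverse = L) (n : ℕ) (p : List ℕ)
    (hp : p ∈ (List.range' 1 n).permutations') (h : b ≤ shellCostList L p) :
    b ≤ maxCost s n := by
  rw [maxCost_eq_perm']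
  refine le_trans h (le_foldr_max ?_)
  rw [shellCost_eq_list s L hL]
  exact List.mem_map_of_mem hp

lemma sortR1 : ((({1} : Finset ℕ).sort (· ≤ ·)).reverse) = [1] := by
  rw [Finset.sort_singleton]
  rfl

lemma sortR12 : ((({1,2} : Finset ℕ).sort (· ≤ ·)).reverse) = [2,1] := by
  rw [Finset.sort_insert _ (by decide) (by decide), Finset.sort_singleton]
  rfl

lemma sortR13 : ((({1,3} : Finset ℕ).sort (· ≤ ·)).reverse) = [3,1] := by
  rw [Finset.sort_insert _ (by decide) (by decide), Finset.sort_singleton]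
  rfl

lemma sortR14 : ((({1,4} : Finset ℕ).sort (· ≤ ·)).reverse) = [4,1] := by
  rw [Finset.sort_insert _ (by decide) (by decide), Finset.sort_singleton]
  rfl

lemma sortR123 : ((({1,2,3} : Finset ℕ).sort (· ≤ ·)).reverse) = [3,2,1] := by
  rw [Finset.sort_insert _ (by decide) (by decide),
      Finset.sort_insert _ (by decide) (by decide), Finset.sort_singleton]
  rfl

lemma sortR124 : ((({1,2,4} : Finset ℕ).sort (· ≤ ·)).reverse) = [4,2,1] := by
  rw [Finset.sort_insert _ (by decide) (by decide),
      Finset.sort_insert _ (by decide) (by decide), Finset.sort_singleton]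
  rfl

lemma sortR134 : ((({1,3,4} : Finset ℕ).sort (· ≤ ·)).reverse) = [4,3,1] := by
  rw [Finset.sort_insert _ (by decide) (by decide),
      Finset.sort_insert _ (by decide) (by decide), Finset.sort_singleton]
  rfl

lemma sortR1234 : ((({1,2,3,4} : Finset ℕ).sort (· ≤ ·)).reverse) = [4,3,2,1] := by
  rw [Finset.sort_insert _ (by decide) (by decide),
      Finset.sort_insert _ (by decide) (by decide),
      Finset.sort_insert _ (by decide) (by decide), Finset.sort_singleton]
  rfl

set_option maxRecDepth 100000 in
lemma maxCost1_2 : maxCost {1} 2 = 1 := by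
  rw [maxCost_eq_perm', shellCost_eq_list {1} [1] sortR1]; decide

set_option maxRecDepth 100000 in
lemma maxCost1_3 : maxCost {1} 3 = 3 := by
  rw [maxCost_eq_perm', shellCost_eq_list {1} [1] sortR1]; decide

set_option maxRecDepth 100000 in
lemma maxCost1_4 : maxCost {1} 4 = 6 := by
  rw [maxCost_eq_perm', shellCost_eq_list {1} [1] sortR1]; decide

set_option maxRecDepth 100000 in
lemma maxCost1_5 : maxCost {1} 5 = 10 := by
  rw [maxCost_eq_perm', shellCost_eq_list {1} [1] sortR1]; decide

set_option maxRecDepth 100000 in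
/-- For every `n ≤ 5`, every gap sequence for `n` has worst case at least
`n(n-1)/2` comparisons; hence `c_n = n(n-1)/2` for `n ≤ 5`. -/
theorem minimax_small (n : ℕ) (hn : n ≤ 5) :
    (∀ s : Finset ℕ, IsGapSeq n s → n * (n - 1) / 2 ≤ maxCost s n) ∧
    minimax n = n * (n - 1) / 2 := by
  have key : ∀ s : Finset ℕ, IsGapSeq n s → n * (n - 1) / 2 ≤ maxCost s n := by
    intro s hs
    obtain ⟨h1, hb⟩ := hs
    interval_cases n
    · exact Nat.zero_le _
    · exact Nat.zero_le _
    · -- n = 2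
      have hp : s ∈ (Finset.Icc 1 1).powerset :=
        Finset.mem_powerset.2 (fun k hk => Finset.mem_Icc.2 ⟨(hb k hk).1, (hb k hk).2⟩)
      fin_cases hp
      · exact absurd h1 (by decide)
      · exact le_maxCost _ [1] sortR1 2 [2,1] (by decide) (by decide)
    · -- n = 3
      have hp : s ∈ (Finset.Icc 1 2).powerset :=
        Finset.mem_powerset.2 (fun k hk => Finset.mem_Icc.2 ⟨(hb k hk).1, (hb k hk).2⟩)
      fin_cases hp
      · exact absurd h1 (by decide)
      · exact le_maxCost _ [1] sortR1 3 [2,3,1] (by decide) (by decide)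
      · exact absurd h1 (by decide)
      · exact le_maxCost _ [2,1] sortR12 3 [2,3,1] (by decide) (by decide)
    · -- n = 4
      have hp : s ∈ (Finset.Icc 1 3).powerset :=
        Finset.mem_powerset.2 (fun k hk => Finset.mem_Icc.2 ⟨(hb k hk).1, (hb k hk).2⟩)
      fin_cases hp
      · exact absurd h1 (by decide)
      · exact le_maxCost _ [1] sortR1 4 [3,4,1,2] (by decide) (by decide)
      · exact absurd h1 (by decide)
      · exact le_maxCost _ [2,1] sortR12 4 [3,2,4,1] (by decide) (by decide)
      · exact absurd h1 (by decide)
      · exact le_maxCost _ [3,1] sortR13 4 [2,4,3,1] (by decide) (by decide)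
      · exact absurd h1 (by decide)
      · exact le_maxCost _ [3,2,1] sortR123 4 [2,3,1,4] (by decide) (by decide)
    · -- n = 5
      have hp : s ∈ (Finset.Icc 1 4).powerset :=
        Finset.mem_powerset.2 (fun k hk => Finset.mem_Icc.2 ⟨(hb k hk).1, (hb k hk).2⟩)
      fin_cases hp
      · exact absurd h1 (by decide)
      · exact le_maxCost _ [1] sortR1 5 [4,5,2,3,1] (by decide) (by decide)
      · exact absurd h1 (by decide)
      · exact le_maxCost _ [2,1] sortR12 5 [3,4,2,5,1] (by decide) (by decide)
      · exact absurd h1 (by decide)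
      · exact le_maxCost _ [3,1] sortR13 5 [4,2,3,5,1] (by decide) (by decide)
      · exact absurd h1 (by decide)
      · exact le_maxCost _ [3,2,1] sortR123 5 [2,3,4,5,1] (by decide) (by decide)
      · exact absurd h1 (by decide)
      · exact le_maxCost _ [4,1] sortR14 5 [2,5,4,3,1] (by decide) (by decide)
      · exact absurd h1 (by decide)
      · exact le_maxCost _ [4,2,1] sortR124 5 [2,4,3,5,1] (by decide) (by decide)
      · exact absurd h1 (by decide)
      · exact le_maxCost _ [4,3,1] sortR134 5 [3,4,5,1,2] (by decide) (by decide)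
      · exact absurd h1 (by decide)
      · exact le_maxCost _ [4,3,2,1] sortR1234 5 [2,3,4,5,1] (by decide) (by decide)
  refine ⟨key, ?_⟩
  interval_cases n
  · -- n = 0 : no gap sequences
    have he : {m | ∃ s : Finset ℕ, IsGapSeq 0 s ∧ maxCost s 0 = m} = ∅ := by
      ext m
      simp only [Set.mem_setOf_eq, Set.mem_empty_iff_false, iff_false]
      rintro ⟨s, ⟨hm1, hbb⟩, -⟩
      have := hbb 1 hm1; omega
    rw [minimax, he, Nat.sInf_empty]
  · -- n = 1 : no gap sequences
    have he : {m | ∃ s : Finset ℕ, IsGapSeq 1 s ∧ maxCost s 1 = m} = ∅ := by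
      ext m
      simp only [Set.mem_setOf_eq, Set.mem_empty_iff_false, iff_false]
      rintro ⟨s, ⟨hm1, hbb⟩, -⟩
      have := hbb 1 hm1; omega
    rw [minimax, he, Nat.sInf_empty]
  · exact le_antisymm
      (Nat.sInf_le ⟨{1}, ⟨⟨by decide, by decide⟩, by rw [maxCost1_2]⟩⟩)
      (le_csInf ⟨_, ⟨{1}, ⟨by decide, by decide⟩, rfl⟩⟩
        (by rintro m ⟨s, hs, rfl⟩; exact key s hs))
  · exact le_antisymm
      (Nat.sInf_le ⟨{1}, ⟨⟨by decide, by decide⟩, by rw [maxCost1_3]⟩⟩)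
      (le_csInf ⟨_, ⟨{1}, ⟨by decide, by decide⟩, rfl⟩⟩
        (by rintro m ⟨s, hs, rfl⟩; exact key s hs))
  · exact le_antisymm
      (Nat.sInf_le ⟨{1}, ⟨⟨by decide, by decide⟩, by rw [maxCost1_4]⟩⟩)
      (le_csInf ⟨_, ⟨{1}, ⟨by decide, by decide⟩, rfl⟩⟩
        (by rintro m ⟨s, hs, rfl⟩; exact key s hs))
  · exact le_antisymm
      (Nat.sInf_le ⟨{1}, ⟨⟨by decide, by decide⟩, by rw [maxCost1_5]⟩⟩)
      (le_csInf ⟨_, ⟨{1}, ⟨by decide, by decide⟩, rfl⟩⟩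
        (by rintro m ⟨s, hs, rfl⟩; exact key s hs))
end

section
/- For any 1 ≤ h < n, the maximum over all permutations of {1,…,n} of the total number of comparisons of Shellsort with gap sequence {1, h} is attained at some permutation whose h residue-class subsequences are all strictly decreasing. -/
lemma insertR_fst_perm (x : ℕ) (l : List ℕ) : (insertR x l).1.Perm (x :: l) := by
  induction l with
  | nil => simp [insertR]
  | cons y ys ih =>
      simp only [insertR]
      split
      · simpa using ((ih.cons y).trans (List.Perm.swap x y ys))
      · rfl

lemma insertR_sorted (x : ℕ) (l : List ℕ) (hl : l.Pairwise (· ≥ ·)) :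
    (insertR x l).1.Pairwise (· ≥ ·) := by
  induction l with
  | nil => simp [insertR]
  | cons y ys ih =>
      simp only [insertR]
      rw [List.pairwise_cons] at hl
      split
      · rename_i hxy
        refine List.pairwise_cons.mpr ⟨?_, ih hl.2⟩
        intro b hb
        rcases List.mem_cons.mp ((insertR_fst_perm x ys).mem_iff.mp hb) with h | h
        · subst h; exact le_of_lt hxy
        · exact hl.1 b h
      · rename_i hxy
        exact List.pairwise_cons.mpr ⟨by
          intro b hb
          rcases List.mem_cons.mp hb with h | h
          · subst h; omega
          · exact le_trans (hl.1 b h) (by omega), List.pairwise_cons.mpr hl⟩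

lemma insertR_snd_le (x : ℕ) (l : List ℕ) : (insertR x l).2 ≤ l.length := by
  induction l with
  | nil => simp [insertR]
  | cons y ys ih =>
      simp only [insertR]
      split
      · simpa using ih
      · simp

lemma insertR_snd_eq (x : ℕ) (l : List ℕ) (h : ∀ y ∈ l, x < y) :
    (insertR x l).2 = l.length := by
  induction l with
  | nil => simp [insertR]
  | cons y ys ih =>
      simp only [insertR]
      rw [if_pos (h y (by simp))]
      simp [ih (fun z hz => h z (by simp [hz]))]

lemma insertR_length (x : ℕ) (l : List ℕ) : (insertR x l).1.length = l.length + 1 := by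
  simpa using (insertR_fst_perm x l).length_eq
def tri (m : ℕ) : ℕ := ∑ i ∈ Finset.range m, i

abbrev istep : List ℕ × ℕ → ℕ → List ℕ × ℕ :=
  fun acc x => let r := insertR x acc.1; (r.1, acc.2 + r.2)

lemma foldl_perm_sorted (l : List ℕ) : ∀ acc : List ℕ × ℕ, acc.1.Pairwise (· ≥ ·) →
    (l.foldl istep acc).1.Perm (l ++ acc.1) ∧ (l.foldl istep acc).1.Pairwise (· ≥ ·) := by
  induction l with
  | nil => intro acc h; simp [h]
  | cons x xs ih =>
      intro acc h
      have h' : ((insertR x acc.1).1).Pairwise (· ≥ ·) := insertR_sorted x acc.1 h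
      obtain ⟨p, s⟩ := ih ((insertR x acc.1).1, acc.2 + (insertR x acc.1).2) h'
      refine ⟨?_, s⟩
      simp only [List.foldl_cons]
      refine p.trans ?_
      refine ((insertR_fst_perm x acc.1).append_left xs).trans ?_
      simpa using (List.perm_middle (a := x) (l₁ := xs) (l₂ := acc.1)).symm

lemma foldl_cost_le (l : List ℕ) : ∀ acc : List ℕ × ℕ,
    (l.foldl istep acc).2 ≤ acc.2 + l.length * acc.1.length + tri l.length := by
  induction l with
  | nil => intro acc; simp [tri]
  | cons x xs ih =>
      intro acc
      simp only [List.foldl_cons]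
      refine le_trans (ih _) ?_
      have h1 := insertR_snd_le x acc.1
      have h2 := insertR_length x acc.1
      simp only [istep, h2]
      have : tri (xs.length + 1) = tri xs.length + xs.length := by
        simp [tri, Finset.sum_range_succ]
      simp only [List.length_cons, this]
      nlinarith

lemma foldl_cost_eq (l : List ℕ) (hl : l.Pairwise (· > ·)) : ∀ acc : List ℕ × ℕ,
    (∀ x ∈ l, ∀ y ∈ acc.1, x < y) →
    (l.foldl istep acc).2 = acc.2 + l.length * acc.1.length + tri l.length := by
  induction l with
  | nil => intro acc _; simp [tri]
  | cons x xs ih =>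
      intro acc hsm
      rw [List.pairwise_cons] at hl
      simp only [List.foldl_cons]
      have hins : (insertR x acc.1).2 = acc.1.length :=
        insertR_snd_eq x acc.1 (hsm x (by simp))
      have hcond : ∀ z ∈ xs, ∀ y ∈ (insertR x acc.1).1, z < y := by
        intro z hz y hy
        rcases List.mem_cons.mp ((insertR_fst_perm x acc.1).mem_iff.mp hy) with h | h
        · subst h; exact hl.1 z hz
        · exact hsm z (by simp [hz]) y h
      show (List.foldl istep ((insertR x acc.1).1, acc.2 + (insertR x acc.1).2) xs).2 = _
      rw [ih hl.2 ((insertR x acc.1).1, acc.2 + (insertR x acc.1).2) hcond]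
      simp only [istep, insertR_length, hins, List.length_cons]
      have : tri (xs.length + 1) = tri xs.length + xs.length := by
        simp [tri, Finset.sum_range_succ]
      rw [this]; ring

lemma isort_perm (l : List ℕ) : (isort l).Perm l := by
  have := (foldl_perm_sorted l ([], 0) (by simp)).1
  simpa [isort, isortAux] using (List.reverse_perm _).trans this

lemma isort_sorted (l : List ℕ) : (isort l).Pairwise (· ≤ ·) := by
  have := (foldl_perm_sorted l ([], 0) (by simp)).2
  rw [isort, List.pairwise_reverse]
  simpa [isortAux] using this

lemma insCost_le (l : List ℕ) : insCost l ≤ tri l.length := by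
  simpa [insCost, isortAux] using foldl_cost_le l ([], 0)

lemma insCost_eq (l : List ℕ) (hl : l.Pairwise (· > ·)) : insCost l = tri l.length := by
  simpa [insCost, isortAux] using foldl_cost_eq l hl ([], 0) (by simp)
lemma isort_eq_of_perm {l l' : List ℕ} (h : l.Perm l') : isort l = isort l' := by
  exact List.Perm.eq_of_pairwise' (isort_sorted l) (isort_sorted l')
    ((isort_perm l).trans (h.trans (isort_perm l').symm))

lemma map_getD_range (l : List ℕ) : (List.range l.length).map (fun i => l.getD i 0) = l := by
  apply List.ext_getElem
  · simp
  · intro i h1 h2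
    simp [List.getD, List.getElem?_eq_getElem h2]

def M (h j N : ℕ) : ℕ := (N + h - 1 - j) / h

lemma filter_range_mod (h j : ℕ) (hh : 0 < h) (hj : j < h) (N : ℕ) :
    (List.range N).filter (fun i => i % h = j) =
      (List.range (M h j N)).map (fun k => j + k * h) := by
  induction N with
  | zero =>
      have : M h j 0 = 0 := by
        apply Nat.div_eq_of_lt; omega
      simp [this]
  | succ N ih =>
      rw [List.range_succ, List.filter_append, ih]
      have hq : h * (N / h) + N % h = N := Nat.div_add_mod N h
      set q := N / h with hqdef
      set r := N % h with hrdef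
      have hrh : r < h := Nat.mod_lt _ hh
      by_cases hr : r = j
      · have hM : M h j N = q := by
          show (N + h - 1 - j) / h = q
          have e : N + h - 1 - j = h * q + (h - 1) := by omega
          rw [e, Nat.mul_add_div hh, Nat.div_eq_of_lt (by omega : h - 1 < h)]
          omega
        have hM' : M h j (N + 1) = q + 1 := by
          show (N + 1 + h - 1 - j) / h = q + 1
          have e : N + 1 + h - 1 - j = h * (q + 1) := by
            have : h * (q + 1) = h * q + h := by ring
            omega
          rw [e, Nat.mul_div_cancel_left _ hh]
        rw [hM, hM', List.range_succ, List.map_append]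
        have hN : j + q * h = N := by
          have : q * h = h * q := by ring
          omega
        have hr' : N % h = j := by omega
        simp [hr', hN]
      · have hMM : M h j (N + 1) = M h j N := by
          show (N + 1 + h - 1 - j) / h = (N + h - 1 - j) / h
          rcases (show j < r ∨ r < j by omega) with hlt | hgt
          · have e1 : N + 1 + h - 1 - j = h * q + (h + r - j) := by omega
            have e2 : N + h - 1 - j = h * q + (h - 1 + r - j) := by omega
            rw [e1, e2, Nat.mul_add_div hh, Nat.mul_add_div hh]
            have d1 : (h + r - j) / h = 1 := by
              apply Nat.div_eq_of_lt_le <;> omega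
            have d2 : (h - 1 + r - j) / h = 1 := by
              apply Nat.div_eq_of_lt_le <;> omega
            rw [d1, d2]
          · have e1 : N + 1 + h - 1 - j = h * q + (h + r - j) := by omega
            have e2 : N + h - 1 - j = h * q + (h - 1 + r - j) := by omega
            rw [e1, e2, Nat.mul_add_div hh, Nat.mul_add_div hh]
            have d1 : (h + r - j) / h = 0 := by apply Nat.div_eq_of_lt; omega
            have d2 : (h - 1 + r - j) / h = 0 := by apply Nat.div_eq_of_lt; omega
            rw [d1, d2]
        rw [hMM]
        have : ¬ (N % h = j) := by omega
        simp [this]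

lemma extract_eq_map (h j : ℕ) (hh : 0 < h) (hj : j < h) (l : List ℕ) :
    extract h j l = (List.range (M h j l.length)).map (fun k => l.getD (j + k * h) 0) := by
  rw [extract, filter_range_mod h j hh hj, List.map_map]
  rfl

lemma extract_length (h j : ℕ) (hh : 0 < h) (hj : j < h) (l : List ℕ) :
    (extract h j l).length = M h j l.length := by
  rw [extract_eq_map h j hh hj]; simp

lemma lt_of_lt_M (h j N k : ℕ) (hh : 0 < h) (hk : k < M h j N) : j + k * h < N := by
  have h1 : k + 1 ≤ (N + h - 1 - j) / h := hk
  have h2 : (k + 1) * h ≤ N + h - 1 - j := (Nat.le_div_iff_mul_le hh).mp h1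
  have h3 : (k + 1) * h = k * h + h := by ring
  omega

lemma extract_build (h : ℕ) (hh : 0 < h) (N : ℕ) (F : ℕ → List ℕ)
    (hF : ∀ j < h, (F j).length = M h j N) (j : ℕ) (hj : j < h) :
    extract h j ((List.range N).map (fun i => (F (i % h)).getD (i / h) 0)) = F j := by
  have hlen : ((List.range N).map (fun i => (F (i % h)).getD (i / h) 0)).length = N := by simp
  rw [extract, hlen, filter_range_mod h j hh hj, List.map_map]
  have key : ∀ k ∈ List.range (M h j N),
      ((fun i => ((List.range N).map (fun i => (F (i % h)).getD (i / h) 0)).getD i 0) ∘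
        (fun k => j + k * h)) k = (F j).getD k 0 := by
    intro k hk
    have hkM : k < M h j N := List.mem_range.mp hk
    have hik : j + k * h < N := lt_of_lt_M h j N k hh hkM
    simp only [Function.comp]
    rw [List.getD_eq_getElem _ _ (by simpa using hik)]
    simp only [List.getElem_map, List.getElem_range]
    have e1 : (j + k * h) % h = j := by
      rw [Nat.add_mul_mod_self_right, Nat.mod_eq_of_lt hj]
    have e2 : (j + k * h) / h = k := by
      rw [Nat.add_mul_div_right _ _ hh, Nat.div_eq_of_lt hj]
      omega
    rw [e1, e2]
  rw [List.map_congr_left key]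
  have := map_getD_range (F j)
  rwa [hF j hj] at this
lemma countP_fiber (h : ℕ) (hh : 0 < h) (p : ℕ → Bool) (N : ℕ) :
    ∑ j ∈ Finset.range h, (List.range N).countP (fun i => decide (i % h = j) && p i) =
      (List.range N).countP p := by
  induction N with
  | zero => simp
  | succ N ih =>
      rw [List.range_succ]
      simp only [List.countP_append]
      rw [Finset.sum_add_distrib, ih]
      congr 1
      have hmem : N % h ∈ Finset.range h := by simp [Nat.mod_lt _ hh]
      calc ∑ j ∈ Finset.range h, List.countP (fun i => decide (i % h = j) && p i) [N]
          = ∑ j ∈ Finset.range h, (if N % h = j then (if p N then 1 else 0) else 0) := by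
            refine Finset.sum_congr rfl (fun j _ => ?_)
            by_cases hj : N % h = j <;> simp [List.countP_cons, hj]
        _ = (if p N then 1 else 0) := by rw [Finset.sum_ite_eq]; simp [hmem]
        _ = List.countP p [N] := by simp [List.countP_cons]

lemma count_eq_countP_range (a : ℕ) (l : List ℕ) :
    l.count a = (List.range l.length).countP (fun i => decide (l.getD i 0 = a)) := by
  conv_lhs => rw [← map_getD_range l]
  rw [List.count, List.countP_map]
  refine List.countP_congr (fun i _ => ?_)
  simp [Function.comp]

lemma count_extract (h j a : ℕ) (l : List ℕ) :
    (extract h j l).count a =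
      (List.range l.length).countP (fun i => decide (i % h = j) && decide (l.getD i 0 = a)) := by
  rw [extract, List.count, List.countP_map, List.countP_filter]
  refine List.countP_congr (fun i _ => ?_)
  simp [Function.comp, Bool.and_comm]

lemma count_eq_sum_extract (h : ℕ) (hh : 0 < h) (a : ℕ) (l : List ℕ) :
    l.count a = ∑ j ∈ Finset.range h, (extract h j l).count a := by
  rw [count_eq_countP_range]
  rw [← countP_fiber h hh (fun i => decide (l.getD i 0 = a)) l.length]
  exact Finset.sum_congr rfl (fun j _ => (count_extract h j a l).symm)

lemma nodup_extract (h j : ℕ) (hh : 0 < h) (l : List ℕ) (hl : l.Nodup) :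
    (extract h j l).Nodup := by
  rw [List.nodup_iff_count_le_one] at hl ⊢
  intro a
  refine le_trans ?_ (hl a)
  rw [count_eq_sum_extract h hh a l]
  by_cases hjh : j < h
  · exact Finset.single_le_sum (f := fun j => (extract h j l).count a)
      (fun _ _ => Nat.zero_le _) (Finset.mem_range.mpr hjh)
  · have hnil : (List.range l.length).filter (fun i => i % h = j) = [] := by
      refine List.filter_eq_nil_iff.mpr ?_
      intro i hi
      have := Nat.mod_lt i hh
      simp only [decide_eq_true_eq]
      omega
    simp [extract, hnil]
def dsort (l : List ℕ) : List ℕ := l.insertionSort (· ≥ ·)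

lemma dsort_perm (l : List ℕ) : (dsort l).Perm l := List.perm_insertionSort _ l

lemma dsort_length (l : List ℕ) : (dsort l).length = l.length := (dsort_perm l).length_eq

lemma dsort_pairwise (l : List ℕ) (hl : l.Nodup) : (dsort l).Pairwise (· > ·) := by
  have hs : (dsort l).Pairwise (· ≥ ·) := List.pairwise_insertionSort _ l
  have hn : (dsort l).Nodup := ((dsort_perm l).nodup_iff).mpr hl
  exact (hs.and hn).imp (fun h => lt_of_le_of_ne h.1 (Ne.symm h.2))

def badify (h : ℕ) (l : List ℕ) : List ℕ :=
  (List.range l.length).map (fun i => (dsort (extract h (i % h) l)).getD (i / h) 0)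

lemma badify_length (h : ℕ) (l : List ℕ) : (badify h l).length = l.length := by
  simp [badify]

lemma extract_badify (h j : ℕ) (hh : 0 < h) (hj : j < h) (l : List ℕ) :
    extract h j (badify h l) = dsort (extract h j l) := by
  exact extract_build h hh l.length (fun j => dsort (extract h j l))
    (fun j hj => by rw [dsort_length, extract_length h j hh hj]) j hj

lemma badify_perm (h : ℕ) (hh : 0 < h) (l : List ℕ) : (badify h l).Perm l := by
  refine List.perm_iff_count.mpr (fun a => ?_)
  rw [count_eq_sum_extract h hh a (badify h l), count_eq_sum_extract h hh a l]
  refine Finset.sum_congr rfl (fun j hj => ?_)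
  rw [extract_badify h j hh (Finset.mem_range.mp hj) l]
  exact (dsort_perm _).count_eq a

lemma badify_badSorted (h : ℕ) (hh : 0 < h) (l : List ℕ) (hl : l.Nodup) :
    BadSorted h (badify h l) := by
  intro j hj
  rw [extract_badify h j hh hj l]
  exact (dsort_pairwise _ (nodup_extract h j hh l hl)).isChain

lemma gapPass_badify (h : ℕ) (hh : 0 < h) (l : List ℕ) :
    gapPass h (badify h l) = gapPass h l := by
  unfold gapPass
  rw [badify_length]
  refine List.map_congr_left (fun i hi => ?_)
  have him : i % h < h := Nat.mod_lt _ hh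
  rw [extract_badify h (i % h) hh him l,
    isort_eq_of_perm (dsort_perm (extract h (i % h) l))]

lemma gapPassCost_le_badify (h : ℕ) (hh : 0 < h) (l : List ℕ) (hl : l.Nodup) :
    gapPassCost h l ≤ gapPassCost h (badify h l) := by
  unfold gapPassCost
  refine List.sum_le_sum (fun j hj => ?_)
  have hjh : j < h := List.mem_range.mp hj
  rw [extract_badify h j hh hjh l]
  calc insCost (extract h j l) ≤ tri (extract h j l).length := insCost_le _
    _ = tri (dsort (extract h j l)).length := by rw [dsort_length]
    _ = insCost (dsort (extract h j l)) :=
        (insCost_eq _ (dsort_pairwise _ (nodup_extract h j hh l hl))).symm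

lemma sort_pair_one (h : ℕ) (hne : h ≠ 1) (h1 : 1 ≤ h) :
    ({1, h} : Finset ℕ).sort (· ≤ ·) = [1, h] := by
  refine (fun hp hs => List.Perm.eq_of_pairwise' (Finset.pairwise_sort _ _) hs hp) ?_ ?_
  · refine (Finset.sort_perm_toList _ _).trans ?_
    have : ({1, h} : Finset ℕ) = insert 1 {h} := rfl
    rw [this]
    refine (Finset.toList_insert (by simp [hne, Ne.symm hne])).trans ?_
    simp
  · simp [List.pairwise_cons]
    omega

lemma shellCost_le_badify (h : ℕ) (h1 : 1 ≤ h) (l : List ℕ) (hl : l.Nodup) :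
    shellCost {1, h} l ≤ shellCost {1, h} (badify h l) := by
  have hh : 0 < h := h1
  by_cases hone : h = 1
  · subst hone
    have : ({1, 1} : Finset ℕ) = {1} := by simp
    rw [shellCost, shellCost, this, Finset.sort_singleton]
    simp only [List.reverse_singleton, shellCostList]
    simpa using gapPassCost_le_badify 1 hh l hl
  · rw [shellCost, shellCost, sort_pair_one h hone h1]
    simp only [List.reverse_cons, List.reverse_nil, List.nil_append, List.cons_append,
      shellCostList]
    rw [gapPass_badify h hh l]
    exact Nat.add_le_add_right (gapPassCost_le_badify h hh l hl) _

/-- For `1 ≤ h < n`, the worst case of Shellsort with gap sequence `{1, h}` over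
permutations of `{1, …, n}` is attained at some permutation all of whose `h`
residue-class subsequences are strictly decreasing. -/
theorem worstCase_attained_at_badSorted (n h : ℕ) (h1 : 1 ≤ h) (h2 : h < n) :
    ∃ l : List ℕ, l.Perm (List.range' 1 n) ∧ BadSorted h l ∧
      ∀ l' : List ℕ, l'.Perm (List.range' 1 n) →
        shellCost {1, h} l' ≤ shellCost {1, h} l := by
  have hh : 0 < h := h1
  set P : List (List ℕ) := (List.range' 1 n).permutations with hP
  have hne : (P.toFinset : Finset (List ℕ)).Nonempty := by
    refine ⟨List.range' 1 n, ?_⟩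
    simp [hP, List.mem_permutations]
  obtain ⟨l₀, hl₀mem, hl₀max⟩ := P.toFinset.exists_max_image (shellCost {1, h}) hne
  have hl₀perm : l₀.Perm (List.range' 1 n) := by
    have := List.mem_toFinset.mp hl₀mem
    rwa [hP, List.mem_permutations] at this
  have hl₀nodup : l₀.Nodup := (hl₀perm.nodup_iff).mpr List.nodup_range'
  refine ⟨badify h l₀, (badify_perm h hh l₀).trans hl₀perm,
    badify_badSorted h hh l₀ hl₀nodup, fun l' hl' => ?_⟩
  have hl'mem : l' ∈ P.toFinset := by
    rw [List.mem_toFinset, hP, List.mem_permutations]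
    exact hl'
  exact le_trans (hl₀max l' hl'mem) (shellCost_le_badify h h1 l₀ hl₀nodup)
end
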